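/- arXiv:1907.10526 — 4 statements merged into one kernel-verified Lean document; each statement's English description precedes it below -/
import Mathlib

section
/- The parallel-beam X-ray projection of the 2-D pixel basis (indicator function of the unit square [0,1)²) at viewing angle θ is the convolution of two one-dimensional elementary box splines with steps sin θ and −cos θ: R_u{1_{[0,1)²}}(s) = (M_{ζ₁} * M_{ζ₂})(s) up to normalization, where ζ₁ = sin θ and ζ₂ = −cos θ are the orthogonal projections of the square's edge vectors onto the detector line. -/
open MeasureTheory

/-- Almost every real avoids a level set of a nondegenerate affine map. -/
lemma ae_affine_ne (a b x : ℝ) (ha : a ≠ 0) : ∀ᵐ u : ℝ, a * u + b ≠ x := by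
  rw [MeasureTheory.ae_iff]
  refine measure_mono_null (fun u hu => ?_) (measure_singleton ((x - b) / a))
  simp only [Set.mem_setOf_eq, not_not] at hu
  simp only [Set.mem_singleton_iff]
  field_simp
  linarith

/-- Scaling an indicator of `uIoc 0 σ` by `σ` gives the indicator of `[0,1)`
away from the endpoints. -/
lemma ind_scale {σ : ℝ} (hσ : σ ≠ 0) {x : ℝ} (h0 : x ≠ 0) (h1 : x ≠ 1) :
    (Set.uIoc (0:ℝ) σ).indicator (fun _ => (1:ℝ)) (σ * x)
      = (Set.Ico (0:ℝ) 1).indicator (fun _ => (1:ℝ)) x := by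
  have hmem : σ * x ∈ Set.uIoc (0:ℝ) σ ↔ x ∈ Set.Ico (0:ℝ) 1 := by
    rcases lt_or_gt_of_ne hσ with h | h
    · rw [Set.uIoc_of_ge h.le]
      simp only [Set.mem_Ioc, Set.mem_Ico]
      constructor
      · rintro ⟨h1', h2'⟩
        constructor <;> nlinarith
      · rintro ⟨h1', h2'⟩
        have hx0 : 0 < x := lt_of_le_of_ne h1' (Ne.symm h0)
        constructor <;> nlinarith
    · rw [Set.uIoc_of_le h.le]
      simp only [Set.mem_Ioc, Set.mem_Ico]
      constructor
      · rintro ⟨h1', h2'⟩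
        have hx1 : x < 1 := lt_of_le_of_ne (by nlinarith) h1
        constructor <;> nlinarith
      · rintro ⟨h1', h2'⟩
        have hx0 : 0 < x := lt_of_le_of_ne h1' (Ne.symm h0)
        constructor <;> nlinarith
  by_cases hx : x ∈ Set.Ico (0:ℝ) 1
  · rw [Set.indicator_of_mem (hmem.mpr hx), Set.indicator_of_mem hx]
  · rw [Set.indicator_of_notMem (fun h => hx (hmem.mp h)), Set.indicator_of_notMem hx]

/-- the parallel-beam X-ray projection of the pixel basis
(indicator of the unit square) at angle `θ` (with `sin θ ≠ 0`, `cos θ ≠ 0`)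
equals the convolution of the indicators of the intervals with endpoints `0`
and `ζ₁ = sin θ`, resp. `0` and `ζ₂ = −cos θ`, normalized by `|sin θ cos θ|`. -/
theorem xray_unit_square_eq_conv (θ : ℝ)
    (hs : Real.sin θ ≠ 0) (hc : Real.cos θ ≠ 0) (s : ℝ) :
    (∫ t : ℝ, (Set.Ico (0:ℝ) 1 ×ˢ Set.Ico (0:ℝ) 1).indicator (fun _ => (1:ℝ))
        (s • (Real.sin θ, -Real.cos θ) + t • (Real.cos θ, Real.sin θ))) =
      (∫ t : ℝ, (Set.uIoc (0:ℝ) (Real.sin θ)).indicator (fun _ => (1:ℝ)) t *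
          (Set.uIoc (0:ℝ) (-Real.cos θ)).indicator (fun _ => (1:ℝ)) (s - t))
        / |Real.sin θ * Real.cos θ| := by
  have hpy : Real.sin θ ^ 2 + Real.cos θ ^ 2 = 1 := Real.sin_sq_add_cos_sq θ
  set σ := Real.sin θ with hσdef
  set c := Real.cos θ with hcdef
  have hsc : σ * c ≠ 0 := mul_ne_zero hs hc
  have habs : |σ * c| ≠ 0 := abs_ne_zero.mpr hsc
  set g : ℝ → ℝ := fun t => (Set.uIoc (0:ℝ) σ).indicator (fun _ => (1:ℝ)) t *
      (Set.uIoc (0:ℝ) (-c)).indicator (fun _ => (1:ℝ)) (s - t) with hg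
  -- substitution t = σ c u + s σ²
  have h1 : (∫ u : ℝ, g (σ * c * u + s * σ ^ 2)) = |(σ * c)⁻¹| • ∫ t : ℝ, g t := by
    have := MeasureTheory.Measure.integral_comp_mul_left
      (fun x => g (x + s * σ ^ 2)) (σ * c)
    simpa [MeasureTheory.integral_add_right_eq_self (fun t => g t) (s * σ ^ 2)] using this
  -- pointwise a.e. identification with the X-ray integrand
  have h2 : (∫ u : ℝ, g (σ * c * u + s * σ ^ 2)) =
      ∫ t : ℝ, (Set.Ico (0:ℝ) 1 ×ˢ Set.Ico (0:ℝ) 1).indicator (fun _ => (1:ℝ))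
        (s • (σ, -c) + t • (c, σ)) := by
    refine integral_congr_ae ?_
    filter_upwards [ae_affine_ne c (s * σ) 0 hc, ae_affine_ne c (s * σ) 1 hc,
      ae_affine_ne σ (s * (-c)) 0 hs, ae_affine_ne σ (s * (-c)) 1 hs] with u hx0 hx1 hy0 hy1
    have hpt : s • (σ, -c) + u • (c, σ) = (s * σ + u * c, s * (-c) + u * σ) := by
      simp [Prod.smul_mk, Prod.mk_add_mk, smul_eq_mul]
    have hprod : (Set.Ico (0:ℝ) 1 ×ˢ Set.Ico (0:ℝ) 1).indicator (fun _ => (1:ℝ))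
        (s * σ + u * c, s * (-c) + u * σ)
        = (Set.Ico (0:ℝ) 1).indicator (fun _ => (1:ℝ)) (s * σ + u * c) *
          (Set.Ico (0:ℝ) 1).indicator (fun _ => (1:ℝ)) (s * (-c) + u * σ) := by
      by_cases hx : (s * σ + u * c) ∈ Set.Ico (0:ℝ) 1 <;>
        by_cases hy : (s * (-c) + u * σ) ∈ Set.Ico (0:ℝ) 1 <;>
        simp [Set.indicator_apply, Set.mem_prod, hx, hy]
    rw [hpt, hprod, hg]
    have harg1 : σ * c * u + s * σ ^ 2 = σ * (s * σ + u * c) := by ring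
    have harg2 : s - (σ * c * u + s * σ ^ 2) = (-c) * (s * (-c) + u * σ) := by
      linear_combination -s * hpy
    have hx0' : s * σ + u * c ≠ 0 := fun h => hx0 (by linarith)
    have hx1' : s * σ + u * c ≠ 1 := fun h => hx1 (by linarith)
    have hy0' : s * (-c) + u * σ ≠ 0 := fun h => hy0 (by linarith)
    have hy1' : s * (-c) + u * σ ≠ 1 := fun h => hy1 (by linarith)
    beta_reduce
    rw [harg2, harg1]
    rw [ind_scale hs hx0' hx1', ind_scale (neg_ne_zero.mpr hc) hy0' hy1']
  rw [eq_div_iff habs]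
  rw [← h2, h1, smul_eq_mul, abs_inv]
  field_simp
end

section
/- The convolution of n ≥ 1 normalized interval indicators (1-D elementary box splines) with positive steps ζ₁,…,ζ_n is given by the iterated difference of the truncated power function: (M_{ζ₁} * ⋯ * M_{ζ_n})(s) = Δ_{ζ₁} ⋯ Δ_{ζ_n} (s)₊^{n−1} / ((n−1)! · ζ₁⋯ζ_n), where Δ_h g(s) = g(s) − g(s−h) and (s)₊^{k} = max(s,0)^k. -/
open MeasureTheory

/-- Normalized indicator of `[0, a)`: the 1-D elementary box spline `M_a`. -/
noncomputable def Mbox (a : ℝ) (s : ℝ) : ℝ :=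
  (Set.Ico (0:ℝ) a).indicator (fun _ => 1 / a) s

/-- Convolution of real functions on ℝ. -/
noncomputable def conv1d (f g : ℝ → ℝ) (s : ℝ) : ℝ := ∫ t : ℝ, f t * g (s - t)

/-- The `(n+1)`-fold convolution `M_{ζ 0} * ⋯ * M_{ζ n}`. -/
noncomputable def multiConv : (n : ℕ) → (Fin (n + 1) → ℝ) → ℝ → ℝ
  | 0, ζ => Mbox (ζ 0)
  | n + 1, ζ => conv1d (Mbox (ζ 0)) (multiConv n (fun i => ζ i.succ))

/-- Backward-difference operator `Δ_h g(s) = g(s) − g(s − h)`. -/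
def diffOp (h : ℝ) (g : ℝ → ℝ) (s : ℝ) : ℝ := g s - g (s - h)

/-- Iterated difference `Δ_{h 0} ⋯ Δ_{h (n-1)}`. -/
def multiDiff : (n : ℕ) → (Fin n → ℝ) → (ℝ → ℝ) → ℝ → ℝ
  | 0, _, g => g
  | n + 1, h, g => diffOp (h 0) (multiDiff n (fun i => h i.succ) g)

/-! ### Auxiliary material -/

/-- Normalized truncated powers: `Tfun 0` is the Heaviside step and
`Tfun (k+1) r = (r)₊^(k+1)/(k+1)!`. -/
noncomputable def Tfun : ℕ → ℝ → ℝ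
  | 0 => Set.indicator (Set.Ici 0) fun _ => 1
  | k + 1 => fun r => (max r 0) ^ (k + 1) / (k + 1).factorial

@[simp] lemma Tfun_zero : Tfun 0 = Set.indicator (Set.Ici 0) fun _ => 1 := rfl

lemma Tfun_succ (k : ℕ) :
    Tfun (k+1) = fun r : ℝ => (max r 0) ^ (k + 1) / ((k + 1).factorial : ℝ) := rfl

lemma Tfun_of_nonneg (k : ℕ) {r : ℝ} (hr : 0 ≤ r) :
    Tfun k r = r ^ k / k.factorial := by
  cases k with
  | zero => simp [Tfun_zero, Set.indicator_of_mem (Set.mem_Ici.2 hr)]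
  | succ k => simp [Tfun_succ, max_eq_left hr]

lemma Tfun_of_nonpos (k : ℕ) {r : ℝ} (hr : r ≤ 0) (hr' : r ≠ 0 ∨ k ≠ 0) :
    Tfun k r = 0 := by
  cases k with
  | zero =>
      rcases hr' with h | h
      · have : r ∉ Set.Ici (0:ℝ) := by simp; exact lt_of_le_of_ne hr h
        simp [Tfun_zero, Set.indicator_of_notMem this]
      · simp at h
  | succ k => simp [Tfun_succ, max_eq_right hr]

lemma Tfun_nonneg (k : ℕ) (r : ℝ) : 0 ≤ Tfun k r := by
  cases k with
  | zero => rw [Tfun_zero]; exact Set.indicator_nonneg (fun _ _ => zero_le_one) r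
  | succ k =>
      rw [Tfun_succ]
      positivity

lemma Tfun_mono (k : ℕ) : Monotone (Tfun k) := by
  cases k with
  | zero =>
      intro a b hab
      rw [Tfun_zero]
      by_cases ha : a ∈ Set.Ici (0:ℝ)
      · have hb : b ∈ Set.Ici (0:ℝ) := le_trans ha hab
        simp [Set.indicator_of_mem ha, Set.indicator_of_mem hb]
      · rw [Set.indicator_of_notMem ha]
        exact Set.indicator_nonneg (fun _ _ => zero_le_one) b
  | succ k =>
      intro a b hab
      rw [Tfun_succ]
      have h1 : max a 0 ≤ max b 0 := max_le_max hab le_rfl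
      have h0 : (0:ℝ) ≤ max a 0 := le_max_right _ _
      exact div_le_div_of_nonneg_right (pow_le_pow_left₀ h0 h1 _)
        (by positivity) |>.trans_eq rfl

lemma Tfun_measurable (k : ℕ) : Measurable (Tfun k) :=
  (Tfun_mono k).measurable

/-- Integral of a truncated power over `[x, y]` with `x ≤ y ≤ 0` vanishes. -/
lemma integral_Tfun_nonpos (k : ℕ) {x y : ℝ} (hxy : x ≤ y) (hy : y ≤ 0) :
    ∫ u in x..y, Tfun k u = 0 := by
  rw [intervalIntegral.integral_of_le hxy]
  rw [show (0:ℝ) = ∫ u in Set.Ioc x y, (0:ℝ) by simp]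
  apply setIntegral_congr_ae measurableSet_Ioc
  filter_upwards [compl_mem_ae_iff.2 (Real.volume_singleton (a := (0:ℝ)))] with u hu huxy
  exact Tfun_of_nonpos k (le_trans huxy.2 hy) (Or.inl hu)

/-- Integral of a truncated power over `[x, y]` with `0 ≤ x ≤ y`. -/
lemma integral_Tfun_nonneg' (k : ℕ) {x y : ℝ} (hx : 0 ≤ x) (hxy : x ≤ y) :
    ∫ u in x..y, Tfun k u = y ^ (k+1) / (k+1).factorial - x ^ (k+1) / (k+1).factorial := by
  have h1 : ∫ u in x..y, Tfun k u = ∫ u in x..y, u ^ k / k.factorial := by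
    apply intervalIntegral.integral_congr
    intro u hu
    rw [Set.uIcc_of_le hxy] at hu
    exact Tfun_of_nonneg k (le_trans hx hu.1)
  rw [h1]
  rw [intervalIntegral.integral_div, integral_pow]
  have hkf : ((k+1).factorial : ℝ) = (k+1) * k.factorial := by
    rw [Nat.factorial_succ]; push_cast; ring
  rw [hkf]
  have h2 : ((k:ℝ) + 1) ≠ 0 := by positivity
  have h3 : (k.factorial : ℝ) ≠ 0 := Nat.cast_ne_zero.2 k.factorial_ne_zero
  field_simp

lemma intervalIntegrable_Tfun (k : ℕ) (x y : ℝ) :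
    IntervalIntegrable (Tfun k) volume x y :=
  (Tfun_mono k).intervalIntegrable

/-- The fundamental integral identity: `∫_x^y T_k = T_{k+1}(y) − T_{k+1}(x)`. -/
lemma integral_Tfun (k : ℕ) (x y : ℝ) :
    ∫ u in x..y, Tfun k u = Tfun (k+1) y - Tfun (k+1) x := by
  have key : ∀ x y : ℝ, x ≤ y → ∫ u in x..y, Tfun k u = Tfun (k+1) y - Tfun (k+1) x := by
    intro x y hxy
    rcases le_or_gt y 0 with hy | hy
    · rw [integral_Tfun_nonpos k hxy hy,
        Tfun_of_nonpos (k+1) hy (Or.inr (Nat.succ_ne_zero k)),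
        Tfun_of_nonpos (k+1) (le_trans hxy hy) (Or.inr (Nat.succ_ne_zero k))]
      ring
    · rcases le_or_gt 0 x with hx | hx
      · rw [integral_Tfun_nonneg' k hx hxy,
          Tfun_of_nonneg (k+1) hy.le, Tfun_of_nonneg (k+1) hx]
      · rw [← intervalIntegral.integral_add_adjacent_intervals
          (intervalIntegrable_Tfun k x 0) (intervalIntegrable_Tfun k 0 y)]
        rw [integral_Tfun_nonpos k hx.le le_rfl,
          integral_Tfun_nonneg' k le_rfl hy.le,
          Tfun_of_nonneg (k+1) hy.le,
          Tfun_of_nonpos (k+1) hx.le (Or.inr (Nat.succ_ne_zero k))]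
        simp
  rcases le_total x y with h | h
  · exact key x y h
  · rw [intervalIntegral.integral_symm, key y x h]; ring

/-- Rewriting a product with `Mbox` as an indicator. -/
lemma Mbox_mul (a : ℝ) (f : ℝ → ℝ) :
    (fun t => Mbox a t * f t) = Set.indicator (Set.Ico 0 a) (fun t => (1/a) * f t) := by
  funext t
  by_cases ht : t ∈ Set.Ico (0:ℝ) a
  · simp [Mbox, Set.indicator_of_mem ht]
  · simp [Mbox, Set.indicator_of_notMem ht]

/-- Predicate: `g` is convolvable against `Mbox a`. -/
def Good (a : ℝ) (g : ℝ → ℝ) : Prop :=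
  ∀ s : ℝ, Integrable (fun t => Mbox a t * g (s - t))

lemma good_Tfun {a : ℝ} (ha : 0 < a) (k : ℕ) : Good a (Tfun k) := by
  intro s
  rw [Mbox_mul a (fun t => Tfun k (s - t))]
  rw [integrable_indicator_iff measurableSet_Ico]
  apply Integrable.const_mul
  apply Measure.integrableOn_of_bounded (M := Tfun k s)
  · exact (measure_Ico_lt_top).ne
  · exact ((Tfun_measurable k).comp (measurable_const.sub measurable_id)).aestronglyMeasurable
  · filter_upwards [ae_restrict_mem measurableSet_Ico] with t ht
    rw [Real.norm_eq_abs, abs_of_nonneg (Tfun_nonneg k _)]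
    exact Tfun_mono k (by linarith [ht.1])

lemma good_shift {a : ℝ} {g : ℝ → ℝ} (hg : Good a g) (c : ℝ) :
    Good a (fun r => g (r - c)) := by
  intro s
  have := hg (s - c)
  simpa [sub_right_comm] using this

lemma good_diffOp {a : ℝ} {g : ℝ → ℝ} (hg : Good a g) (c : ℝ) :
    Good a (diffOp c g) := by
  intro s
  have h1 := hg s
  have h2 := good_shift hg c s
  have : (fun t => Mbox a t * diffOp c g (s - t))
      = fun t => Mbox a t * g (s - t) - Mbox a t * g (s - t - c) := by
    funext t; simp [diffOp, mul_sub]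
  rw [this]
  exact h1.sub h2

lemma good_multiDiff {a : ℝ} {g : ℝ → ℝ} (hg : Good a g) :
    ∀ (m : ℕ) (h : Fin m → ℝ), Good a (multiDiff m h g)
  | 0, _ => hg
  | m + 1, h => good_diffOp (good_multiDiff hg m (fun i => h i.succ)) (h 0)

lemma conv_diffOp {a : ℝ} {g : ℝ → ℝ} (hg : Good a g) (c s : ℝ) :
    conv1d (Mbox a) (diffOp c g) s = diffOp c (conv1d (Mbox a) g) s := by
  unfold conv1d diffOp
  have : (fun t => Mbox a t * (g (s - t) - g (s - t - c)))
      = fun t => Mbox a t * g (s - t) - Mbox a t * g (s - c - t) := by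
    funext t; rw [mul_sub, sub_right_comm]
  rw [this, integral_sub (hg s) (hg (s - c))]

lemma conv_multiDiff {a : ℝ} {g : ℝ → ℝ} (hg : Good a g) :
    ∀ (m : ℕ) (h : Fin m → ℝ) (s : ℝ),
      conv1d (Mbox a) (multiDiff m h g) s = multiDiff m h (conv1d (Mbox a) g) s := by
  intro m
  induction m with
  | zero => intro h s; rfl
  | succ m ih =>
      intro h s
      have hG : Good a (multiDiff m (fun i => h i.succ) g) :=
        good_multiDiff hg m (fun i => h i.succ)
      show conv1d (Mbox a) (diffOp (h 0) (multiDiff m (fun i => h i.succ) g)) s = _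
      rw [conv_diffOp hG]
      show _ = diffOp (h 0) (multiDiff m (fun i => h i.succ) (conv1d (Mbox a) g)) s
      unfold diffOp
      rw [ih (fun i => h i.succ) s, ih (fun i => h i.succ) (s - h 0)]

/-- Convolving `Mbox a` with `Tfun k` yields the difference of `Tfun (k+1)`. -/
lemma conv_Mbox_Tfun {a : ℝ} (ha : 0 < a) (k : ℕ) (s : ℝ) :
    conv1d (Mbox a) (Tfun k) s = diffOp a (Tfun (k+1)) s / a := by
  unfold conv1d
  rw [Mbox_mul a (fun t => Tfun k (s - t)), integral_indicator measurableSet_Ico]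
  rw [setIntegral_congr_set Ico_ae_eq_Ioc]
  rw [← intervalIntegral.integral_of_le ha.le]
  rw [intervalIntegral.integral_const_mul]
  rw [intervalIntegral.integral_comp_sub_left (Tfun k) s]
  rw [integral_Tfun k (s - a) (s - 0)]
  rw [sub_zero]
  unfold diffOp
  ring

lemma multiDiff_div : ∀ (m : ℕ) (h : Fin m → ℝ) (g : ℝ → ℝ) (c s : ℝ),
    multiDiff m h (fun r => g r / c) s = multiDiff m h g s / c := by
  intro m
  induction m with
  | zero => intro h g c s; rfl
  | succ m ih =>
      intro h g c s
      show diffOp (h 0) (multiDiff m (fun i => h i.succ) fun r => g r / c) s = _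
      unfold diffOp
      rw [ih, ih]
      show _ = (multiDiff m (fun i => h i.succ) g s
        - multiDiff m (fun i => h i.succ) g (s - h 0)) / c
      rw [sub_div]

lemma multiDiff_diffOp : ∀ (m : ℕ) (h : Fin m → ℝ) (c : ℝ) (g : ℝ → ℝ) (s : ℝ),
    multiDiff m h (diffOp c g) s = diffOp c (multiDiff m h g) s := by
  intro m
  induction m with
  | zero => intro h c g s; rfl
  | succ m ih =>
      intro h c g s
      show diffOp (h 0) (multiDiff m (fun i => h i.succ) (diffOp c g)) s = _
      have hfun : multiDiff m (fun i => h i.succ) (diffOp c g)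
          = fun s => diffOp c (multiDiff m (fun i => h i.succ) g) s :=
        funext (ih (fun i => h i.succ) c g)
      rw [hfun]
      show _ = diffOp c (diffOp (h 0) (multiDiff m (fun i => h i.succ) g)) s
      unfold diffOp
      rw [sub_right_comm s c (h 0)]
      ring

lemma conv_div (f g : ℝ → ℝ) (c s : ℝ) :
    conv1d f (fun r => g r / c) s = conv1d f g s / c := by
  unfold conv1d
  rw [← integral_div]
  congr 1
  funext t
  ring

/-- The main induction: the convolution of the boxes equals the iterated
difference of the normalized truncated power. -/
lemma multiConv_eq_Tfun : ∀ (n : ℕ) (ζ : Fin (n+1) → ℝ), (∀ i, 0 < ζ i) → ∀ s : ℝ,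
    multiConv n ζ s = multiDiff (n+1) ζ (Tfun n) s / ∏ i, ζ i := by
  intro n
  induction n with
  | zero =>
      intro ζ hζ s
      have ha := hζ 0
      show Mbox (ζ 0) s = _
      have hprod : (∏ i, ζ i) = ζ 0 := by simp
      rw [hprod]
      show Mbox (ζ 0) s = (Tfun 0 s - Tfun 0 (s - ζ 0)) / ζ 0
      rw [Tfun_zero]
      unfold Mbox
      by_cases h1 : (0:ℝ) ≤ s
      · by_cases h2 : s < ζ 0
        · rw [Set.indicator_of_mem (Set.mem_Ico.2 ⟨h1, h2⟩),
            Set.indicator_of_mem (Set.mem_Ici.2 h1),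
            Set.indicator_of_notMem (by simp; linarith : s - ζ 0 ∉ Set.Ici (0:ℝ))]
          ring
        · rw [Set.indicator_of_notMem (fun h => h2 (Set.mem_Ico.1 h).2),
            Set.indicator_of_mem (Set.mem_Ici.2 h1),
            Set.indicator_of_mem (by simp; linarith : s - ζ 0 ∈ Set.Ici (0:ℝ))]
          ring
      · rw [Set.indicator_of_notMem (fun h => h1 (Set.mem_Ico.1 h).1),
          Set.indicator_of_notMem (by simpa using h1),
          Set.indicator_of_notMem (by simp; linarith : s - ζ 0 ∉ Set.Ici (0:ℝ))]
        ring
  | succ n ih =>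
      intro ζ hζ s
      have ha := hζ 0
      show conv1d (Mbox (ζ 0)) (multiConv n (fun i => ζ i.succ)) s = _
      have htail : multiConv n (fun i => ζ i.succ)
          = fun s => multiDiff (n+1) (fun i => ζ i.succ) (Tfun n) s / ∏ i : Fin (n+1), ζ i.succ :=
        funext (ih (fun i => ζ i.succ) (fun i : Fin (n+1) => hζ i.succ))
      rw [htail, conv_div, conv_multiDiff (good_Tfun ha n)]
      have hconv : conv1d (Mbox (ζ 0)) (Tfun n)
          = fun s => diffOp (ζ 0) (Tfun (n+1)) s / ζ 0 :=
        funext (conv_Mbox_Tfun ha n)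
      rw [hconv, multiDiff_div, multiDiff_diffOp]
      show diffOp (ζ 0) (multiDiff (n+1) (fun i => ζ i.succ) (Tfun (n+1))) s
          / ζ 0 / ∏ i : Fin (n+1), ζ i.succ = _
      have hprod : (∏ i, ζ i) = ζ 0 * ∏ i : Fin (n+1), ζ i.succ := Fin.prod_univ_succ ζ
      rw [hprod, div_div]
      rfl

/-- for `n + 1 ≥ 2` positive steps, the convolution of the
normalized interval indicators equals the iterated difference of the truncated
power: `M_{ζ₁} * ⋯ * M_{ζ_{n+1}} = Δ_{ζ₁}⋯Δ_{ζ_{n+1}} (s)₊ⁿ / (n!·ζ₁⋯ζ_{n+1})`. -/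
theorem multiConv_eq_multiDiff_truncPower (n : ℕ) (hn : 1 ≤ n)
    (ζ : Fin (n + 1) → ℝ) (hζ : ∀ i, 0 < ζ i) (s : ℝ) :
    multiConv n ζ s =
      multiDiff (n + 1) ζ (fun r => (max r 0) ^ n) s
        / ((n.factorial : ℝ) * ∏ i, ζ i) := by
  obtain ⟨m, rfl⟩ : ∃ m, n = m + 1 := ⟨n - 1, (Nat.succ_pred_eq_of_pos hn).symm⟩
  rw [multiConv_eq_Tfun (m+1) ζ hζ s]
  have hT : Tfun (m+1) = fun r => (max r 0) ^ (m+1) / ((m+1).factorial : ℝ) :=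
    Tfun_succ m
  rw [hT, multiDiff_div, div_div, mul_comm ((m+1).factorial : ℝ)]
end

section
/- The fan-beam projection of the unit square pixel basis, computed along the full line through source p with direction v(s), equals the evaluation of a 2-direction box spline whose directions are the projections of the square's edges onto the line orthogonal to v(s): ∫_ℝ 1_{[0,1)²}(p + t·v) dt = Δ_{ζ₁} Δ_{ζ₂} (s')₊ / |ζ₁ ζ₂| where ζᵢ = ⟨eᵢ, v⊥⟩ (e₁ = (1,0), e₂ = (0,1)), s' = ⟨p, v⊥⟩, assuming ζ₁, ζ₂ ≠ 0. -/
open MeasureTheory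

/-- Truncated power `(s)₊ = max(s, 0)`. -/
noncomputable def truncPos (s : ℝ) : ℝ := max s 0

/-!
The line `p + t v` meets the square in the intersection of the two parameter intervals on which
a coordinate of `p + t v` lies in `[0, 1)`; the `i`-th one has endpoints `-pᵢ / vᵢ` and
`(1 - pᵢ) / vᵢ`. The length of `[l₁, u₁] ∩ [l₂, u₂]` is the convolution of two box functions,
i.e. the second difference `Δ_{u₁ - l₁} Δ_{u₂ - l₂} (·)₊` at `u₂ - l₁`; exchanging the endpoints
of one interval only flips its sign. Multiplying all arguments by `v₁ v₂` turns the steps into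
`ζ₁, ζ₂` and the point into `s'`, and scales the second difference by `|v₁ v₂|`.
-/

open Set

/-- `Δ_{h₁} Δ_{h₂} f (s)`. -/
def doubleDiff (f : ℝ → ℝ) (h₁ h₂ s : ℝ) : ℝ :=
  f s - f (s - h₁) - f (s - h₂) + f (s - h₁ - h₂)

lemma doubleDiff_swap_left (f : ℝ → ℝ) (a b h s : ℝ) :
    doubleDiff f (a - b) h (s - b) = -doubleDiff f (b - a) h (s - a) := by
  simp only [doubleDiff]
  ring_nf

lemma doubleDiff_swap_right (f : ℝ → ℝ) (a b h c : ℝ) :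
    doubleDiff f h (a - b) (a - c) = -doubleDiff f h (b - a) (b - c) := by
  simp only [doubleDiff]
  ring_nf

lemma truncPos_mul (c x : ℝ) : truncPos (c * x) = |c| * truncPos x + min c 0 * x := by
  unfold truncPos
  rcases le_total 0 c with hc | hc
  · rw [abs_of_nonneg hc, min_eq_right hc, mul_max_of_nonneg _ _ hc, mul_zero, zero_mul, add_zero]
  · rw [abs_of_nonpos hc, min_eq_left hc]
    rcases le_total 0 x with hx | hx
    · rw [max_eq_left hx, max_eq_right (mul_nonpos_of_nonpos_of_nonneg hc hx)]; ring
    · rw [max_eq_right hx, max_eq_left (mul_nonneg_of_nonpos_of_nonpos hc hx)]; ring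

/-- The linear part `min c 0 * x` of `truncPos_mul` is annihilated by the second difference. -/
lemma doubleDiff_truncPos_mul (c h₁ h₂ s : ℝ) :
    doubleDiff truncPos (c * h₁) (c * h₂) (c * s) = |c| * doubleDiff truncPos h₁ h₂ s := by
  simp only [doubleDiff, ← mul_sub, truncPos_mul]
  ring

lemma doubleDiff_truncPos_eq_overlap {l₁ u₁ l₂ u₂ : ℝ} (h₁ : l₁ ≤ u₁) (h₂ : l₂ ≤ u₂) :
    doubleDiff truncPos (u₁ - l₁) (u₂ - l₂) (u₂ - l₁) = max (min u₁ u₂ - max l₁ l₂) 0 := by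
  simp only [doubleDiff, truncPos, max_def, min_def]
  split_ifs <;> linarith

lemma abs_doubleDiff_truncPos_eq_overlap (a₁ b₁ a₂ b₂ : ℝ) :
    |doubleDiff truncPos (b₁ - a₁) (b₂ - a₂) (b₂ - a₁)| =
      max (min (max a₁ b₁) (max a₂ b₂) - max (min a₁ b₁) (min a₂ b₂)) 0 := by
  wlog h₁ : a₁ ≤ b₁ generalizing a₁ b₁
  · rw [max_comm a₁, min_comm a₁, ← this b₁ a₁ (le_of_not_ge h₁), doubleDiff_swap_left, abs_neg]
  wlog h₂ : a₂ ≤ b₂ generalizing a₂ b₂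
  · rw [max_comm a₂, min_comm a₂, ← this b₂ a₂ (le_of_not_ge h₂), doubleDiff_swap_right, abs_neg]
  rw [max_eq_right h₁, min_eq_left h₁, max_eq_right h₂, min_eq_left h₂,
    doubleDiff_truncPos_eq_overlap h₁ h₂, abs_of_nonneg (le_max_right _ _)]

lemma volume_real_uIcc_inter_uIcc (a₁ b₁ a₂ b₂ : ℝ) :
    volume.real (uIcc a₁ b₁ ∩ uIcc a₂ b₂) =
      max (min (max a₁ b₁) (max a₂ b₂) - max (min a₁ b₁) (min a₂ b₂)) 0 := by
  rw [uIcc, uIcc, Icc_inter_Icc, Real.volume_real_Icc]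

lemma affine_preimage_Ico_ae_eq_uIcc {a b : ℝ} (hab : a ≤ b) (x : ℝ) {w : ℝ} (hw : w ≠ 0) :
    (fun t => x + t * w) ⁻¹' Ico a b =ᵐ[volume] uIcc ((a - x) / w) ((b - x) / w) := by
  have : (fun t => x + t * w) ⁻¹' Ico a b = (fun t => t * w) ⁻¹' Ico (a - x) (b - x) := by
    rw [← preimage_const_add_Ico]; rfl
  rw [this]
  rcases hw.lt_or_gt with hw | hw
  · rw [preimage_mul_const_Ico_of_neg _ _ hw,
      uIcc_of_ge (div_le_div_of_nonpos_of_le hw.le (by linarith))]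
    exact Ioc_ae_eq_Icc
  · rw [preimage_mul_const_Ico₀ _ _ hw, uIcc_of_le (div_le_div_of_nonneg_right (by linarith) hw.le)]
    exact Ico_ae_eq_Icc

lemma integral_indicator_line_Ico_prod {a₁ b₁ a₂ b₂ : ℝ} (h₁ : a₁ ≤ b₁) (h₂ : a₂ ≤ b₂)
    (p : ℝ × ℝ) {v : ℝ × ℝ} (hv₁ : v.1 ≠ 0) (hv₂ : v.2 ≠ 0) :
    ∫ t : ℝ, (Ico a₁ b₁ ×ˢ Ico a₂ b₂).indicator (fun _ => (1 : ℝ)) (p + t • v) =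
      volume.real (uIcc ((a₁ - p.1) / v.1) ((b₁ - p.1) / v.1) ∩
        uIcc ((a₂ - p.2) / v.2) ((b₂ - p.2) / v.2)) := by
  set line : ℝ → ℝ × ℝ := fun t => p + t • v
  have hline : line ⁻¹' (Ico a₁ b₁ ×ˢ Ico a₂ b₂) =
      (fun t => p.1 + t * v.1) ⁻¹' Ico a₁ b₁ ∩ (fun t => p.2 + t * v.2) ⁻¹' Ico a₂ b₂ := by
    ext t; simp [line]
  have hmeas : MeasurableSet (line ⁻¹' (Ico a₁ b₁ ×ˢ Ico a₂ b₂)) :=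
    (measurableSet_Ico.prod measurableSet_Ico).preimage (by fun_prop)
  calc ∫ t : ℝ, (Ico a₁ b₁ ×ˢ Ico a₂ b₂).indicator (fun _ => (1 : ℝ)) (line t)
      = ∫ t : ℝ, (line ⁻¹' (Ico a₁ b₁ ×ˢ Ico a₂ b₂)).indicator 1 t :=
        integral_congr_ae (.of_forall fun t => (indicator_comp_right _).symm)
    _ = _ := by
      rw [integral_indicator_one hmeas, hline]
      exact measureReal_congr ((affine_preimage_Ico_ae_eq_uIcc h₁ p.1 hv₁).inter
        (affine_preimage_Ico_ae_eq_uIcc h₂ p.2 hv₂))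

theorem fanbeam_pixel_eq_box_spline_general
    (v : ℝ × ℝ)
    (p : ℝ × ℝ)
    (ζ₁ ζ₂ s' : ℝ)
    (hζ₁ : ζ₁ = v.2) (hζ₂ : ζ₂ = -v.1)
    (h₁ : ζ₁ ≠ 0) (h₂ : ζ₂ ≠ 0)
    (hs' : s' = p.1 * v.2 - p.2 * v.1) :
    (∫ t : ℝ, (Set.Ico (0:ℝ) 1 ×ˢ Set.Ico (0:ℝ) 1).indicator (fun _ => (1:ℝ))
        (p + t • v)) =
      |truncPos s' - truncPos (s' - ζ₁) - truncPos (s' - ζ₂)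
          + truncPos (s' - ζ₁ - ζ₂)| / |ζ₁ * ζ₂| := by
  change _ = |doubleDiff truncPos ζ₁ ζ₂ s'| / _
  subst hζ₁ hζ₂ hs'
  have hv₁ : v.1 ≠ 0 := neg_ne_zero.mp h₂
  rw [integral_indicator_line_Ico_prod zero_le_one zero_le_one p hv₁ h₁, uIcc_comm (_ / v.2),
    volume_real_uIcc_inter_uIcc, ← abs_doubleDiff_truncPos_eq_overlap]
  have hscale : doubleDiff truncPos v.2 (-v.1) (p.1 * v.2 - p.2 * v.1) =
      doubleDiff truncPos (v.1 * v.2 * ((1 - p.1) / v.1 - (0 - p.1) / v.1))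
        (v.1 * v.2 * ((0 - p.2) / v.2 - (1 - p.2) / v.2))
        (v.1 * v.2 * ((0 - p.2) / v.2 - (0 - p.1) / v.1)) := by
    congr 1 <;> field_simp <;> ring
  rw [hscale, doubleDiff_truncPos_mul, abs_mul, abs_abs, mul_neg, abs_neg, mul_comm v.2,
    mul_div_cancel_left₀ _ (abs_ne_zero.mpr (mul_ne_zero hv₁ h₁))]

/-- the fan-beam projection of the unit-square pixel basis along
the full line through `p` with unit direction `v` equals the evaluation of a
2-direction box spline: with `v⊥ = (v₂, −v₁)`, `ζᵢ = ⟨eᵢ, v⊥⟩`,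
`s' = ⟨p, v⊥⟩`, it equals `|Δ_{ζ₁} Δ_{ζ₂} (s')₊| / |ζ₁ ζ₂|`. -/
theorem fanbeam_pixel_eq_box_spline
    (v : ℝ × ℝ) (hv : v.1 ^ 2 + v.2 ^ 2 = 1)
    (p : ℝ × ℝ)
    (ζ₁ ζ₂ s' : ℝ)
    (hζ₁ : ζ₁ = v.2) (hζ₂ : ζ₂ = -v.1)
    (h₁ : ζ₁ ≠ 0) (h₂ : ζ₂ ≠ 0)
    (hs' : s' = p.1 * v.2 - p.2 * v.1) :
    (∫ t : ℝ, (Set.Ico (0:ℝ) 1 ×ˢ Set.Ico (0:ℝ) 1).indicator (fun _ => (1:ℝ))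
        (p + t • v)) =
      |truncPos s' - truncPos (s' - ζ₁) - truncPos (s' - ζ₂)
          + truncPos (s' - ζ₁ - ζ₂)| / |ζ₁ * ζ₂| :=
  fanbeam_pixel_eq_box_spline_general v p ζ₁ ζ₂ s' hζ₁ hζ₂ h₁ h₂ hs'
end

section
/- The parallel-beam projection of the pixel basis with box detector blur is a 3-direction box spline: for viewing angle θ with sin θ ≠ 0, cos θ ≠ 0, and bin width τ > 0, the function s ↦ ∫_{s−τ/2}^{s+τ/2} R_u{1_{[0,1)²}}(r) dr / τ equals the 3-fold convolution M_{|sin θ|} * M_{|cos θ|} * M_τ evaluated at an appropriately shifted argument, and in particular it is given by the second-order truncated-power formula Δ_{a}Δ_{b}Δ_{τ}(s)₊²/(2·a·b·τ) with a = |sin θ|, b = |cos θ| (after centering shifts). -/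
open MeasureTheory

/-!
Both sides are threefold differences of the truncated power `x₊²`. Convolving with `M_c` is
`Δ_c / c` applied to an antiderivative, and `M_c` is itself `Δ_c / c` of the Heaviside function,
so `M_a * M_b * M_τ = Δ_a Δ_b Δ_τ (x₊² / 2) / (a b τ)`. On the other side, after the change of
variables along the line the projection of the pixel is the trapezoid
`Δ_{cos θ} Δ_{sin θ} x₊ / (cos θ sin θ)`, and averaging over the detector bin applies `Δ_τ / τ` to
its antiderivative. Negative step sizes only translate the argument:
`Δ_h g(x) / h = Δ_{|h|} g(x + (|h| - h)/2) / |h|`.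
-/

open Set

section DiffOp

variable (h : ℝ)

lemma diffOp_comm (a b : ℝ) (g : ℝ → ℝ) : diffOp a (diffOp b g) = diffOp b (diffOp a g) := by
  funext x
  simp only [diffOp]
  ring_nf

lemma diffOp_div_const (g : ℝ → ℝ) (k : ℝ) :
    diffOp h (fun y => g y / k) = fun x => diffOp h g x / k :=
  funext fun _ => (sub_div _ _ _).symm

lemma diffOp_comp_add_const (g : ℝ → ℝ) (k x : ℝ) :
    diffOp h (fun y => g (y + k)) x = diffOp h g (x + k) := by
  simp only [diffOp, sub_add_eq_add_sub]

lemma diffOp_div_self_eq_abs (g : ℝ → ℝ) (x : ℝ) :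
    diffOp h g x / h = diffOp |h| g (x + (|h| - h) / 2) / |h| := by
  rcases le_or_gt 0 h with hh | hh
  · simp [abs_of_nonneg hh]
  · rw [abs_of_neg hh, diffOp, diffOp]
    ring_nf

lemma Continuous.diffOp {g : ℝ → ℝ} (hg : Continuous g) : Continuous (diffOp h g) :=
  hg.sub (hg.comp (continuous_sub_right h))

lemma integral_diffOp {f F : ℝ → ℝ} (hf : ∀ u v, IntervalIntegrable f volume u v)
    (hF : ∀ u v, ∫ x in u..v, f x = F v - F u) (u v : ℝ) :
    ∫ x in u..v, diffOp h f x = diffOp h F v - diffOp h F u := by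
  simp only [diffOp]
  rw [intervalIntegral.integral_sub (hf u v)
      (by simpa using (hf (u - h) (v - h)).comp_sub_right h),
    intervalIntegral.integral_comp_sub_right, hF, hF]
  ring

lemma diffOp_diffOp_div_eq_abs (a b : ℝ) (F : ℝ → ℝ) (x : ℝ) :
    diffOp a (diffOp b F) x / (a * b)
      = diffOp |a| (diffOp |b| F) (x + ((|a| - a) + (|b| - b)) / 2) / (|a| * |b|) := by
  calc diffOp a (diffOp b F) x / (a * b)
      = diffOp a (fun y => diffOp b F y / b) x / a := by
        rw [diffOp_div_const, div_div, mul_comm]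
    _ = diffOp |a| (fun y => diffOp |b| F (y + (|b| - b) / 2) / |b|) (x + (|a| - a) / 2) / |a| := by
        simp only [diffOp_div_self_eq_abs b, diffOp_div_self_eq_abs a]
    _ = _ := by
        simp only [diffOp_div_const, diffOp_comp_add_const]
        rw [div_div, mul_comm |b|, add_assoc, ← add_div]

end DiffOp

lemma hasDerivAt_max_zero {x : ℝ} (hx : x ≠ 0) :
    HasDerivAt (fun y => max y 0) ((Ici (0:ℝ)).indicator (1 : ℝ → ℝ) x) x := by
  rcases hx.lt_or_gt with hx | hx
  · have hev : (fun y : ℝ => max y 0) =ᶠ[nhds x] fun _ => 0 := by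
      filter_upwards [Iio_mem_nhds hx] with y hy using max_eq_right (le_of_lt hy)
    simpa [not_le.2 hx] using (hasDerivAt_const x (0:ℝ)).congr_of_eventuallyEq hev
  · have hev : (fun y : ℝ => max y 0) =ᶠ[nhds x] id := by
      filter_upwards [Ioi_mem_nhds hx] with y hy using max_eq_left (le_of_lt hy)
    simpa [hx.le] using (hasDerivAt_id x).congr_of_eventuallyEq hev

lemma intervalIntegrable_indicator_one {s : Set ℝ} (hs : MeasurableSet s) (u v : ℝ) :
    IntervalIntegrable (s.indicator (1 : ℝ → ℝ)) volume u v :=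
  ⟨(intervalIntegrable_const (c := (1:ℝ))).1.indicator hs,
    (intervalIntegrable_const (c := (1:ℝ))).2.indicator hs⟩

lemma integral_indicator_Ici_zero (u v : ℝ) :
    ∫ x in u..v, (Ici (0:ℝ)).indicator (1 : ℝ → ℝ) x = max v 0 - max u 0 :=
  integral_eq_of_hasDerivAt_off_countable _ _ (countable_singleton 0)
    (continuous_id.max continuous_const).continuousOn
    (fun _ hx => hasDerivAt_max_zero hx.2)
    (intervalIntegrable_indicator_one measurableSet_Ici _ _)

lemma integral_max_zero (u v : ℝ) :
    ∫ x in u..v, max x 0 = max v 0 ^ 2 / 2 - max u 0 ^ 2 / 2 := by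
  refine integral_eq_of_hasDerivAt_off_countable (fun y => max y 0 ^ 2 / 2) _
    (countable_singleton 0) (by fun_prop) (fun x hx => ?_)
    ((continuous_id.max continuous_const).intervalIntegrable _ _)
  refine (((hasDerivAt_max_zero hx.2).fun_pow 2).div_const 2).congr_deriv ?_
  rcases le_or_gt 0 x with h | h
  · simp [h]
  · simp [h.le, not_le.2 h]

lemma integral_diffOp_diffOp_max_zero (a b u v : ℝ) :
    ∫ x in u..v, diffOp a (diffOp b (fun y => max y 0)) x
      = (diffOp a (diffOp b (fun y => max y 0 ^ 2)) v
        - diffOp a (diffOp b (fun y => max y 0 ^ 2)) u) / 2 := by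
  have hcont : Continuous fun y : ℝ => max y 0 := continuous_id.max continuous_const
  have := integral_diffOp a (fun _ _ => (hcont.diffOp b).intervalIntegrable _ _)
    (integral_diffOp b (fun _ _ => hcont.intervalIntegrable _ _) integral_max_zero) u v
  simpa only [diffOp_div_const, sub_div] using this

lemma indicator_Ico_zero_eq_diffOp {c : ℝ} (hc : 0 ≤ c) (x : ℝ) :
    (Ico 0 c).indicator (1 : ℝ → ℝ) x = diffOp c ((Ici 0).indicator 1) x := by
  by_cases h0 : 0 ≤ x <;> by_cases hxc : c ≤ x <;>
    simp [diffOp, indicator_apply, h0, hxc, sub_nonneg]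
  linarith

lemma integral_indicator_Ico_zero {c : ℝ} (hc : 0 ≤ c) (u v : ℝ) :
    ∫ x in u..v, (Ico 0 c).indicator (1 : ℝ → ℝ) x
      = diffOp c (fun y => max y 0) v - diffOp c (fun y => max y 0) u := by
  simp only [indicator_Ico_zero_eq_diffOp hc]
  exact integral_diffOp c (intervalIntegrable_indicator_one measurableSet_Ici)
    integral_indicator_Ici_zero u v

lemma integral_indicator_Ico_eq_intervalIntegral {a b : ℝ} (hab : a ≤ b) (f : ℝ → ℝ) :
    ∫ x, (Ico a b).indicator f x = ∫ x in a..b, f x := by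
  rw [integral_indicator measurableSet_Ico, integral_Ico_eq_integral_Ioc,
    intervalIntegral.integral_of_le hab]

lemma integral_Mbox {c : ℝ} (hc : 0 < c) (u v : ℝ) :
    ∫ x in u..v, Mbox c x
      = diffOp c (fun y => max y 0) v / c - diffOp c (fun y => max y 0) u / c := by
  have hM : ∀ x, Mbox c x = (Ico 0 c).indicator (1 : ℝ → ℝ) x / c := fun x => by
    simp [Mbox, indicator_apply, div_eq_inv_mul]
  simp only [hM, intervalIntegral.integral_div, integral_indicator_Ico_zero hc.le, sub_div]

lemma conv1d_Mbox_eq_diffOp {c : ℝ} (hc : 0 < c) {g G : ℝ → ℝ}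
    (hG : ∀ u v, ∫ x in u..v, g x = G v - G u) (s : ℝ) :
    conv1d (Mbox c) g s = diffOp c G s / c := by
  have hM : (fun t => Mbox c t * g (s - t)) = (Ico 0 c).indicator (fun t => g (s - t) / c) := by
    funext t
    simp [Mbox, indicator_apply, div_eq_inv_mul]
  rw [conv1d, hM, integral_indicator_Ico_eq_intervalIntegral hc.le, intervalIntegral.integral_div,
    intervalIntegral.integral_comp_sub_left, hG, sub_zero, diffOp]

lemma conv1d_Mbox_Mbox {b τ : ℝ} (hb : 0 < b) (hτ : 0 < τ) :
    conv1d (Mbox b) (Mbox τ) = fun x => diffOp b (diffOp τ (fun y => max y 0)) x / (b * τ) := by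
  funext x
  rw [conv1d_Mbox_eq_diffOp hb (integral_Mbox hτ), diffOp_div_const, div_div, mul_comm]

lemma conv1d_Mbox_conv1d_Mbox_Mbox {a b τ : ℝ} (ha : 0 < a) (hb : 0 < b) (hτ : 0 < τ) (w : ℝ) :
    conv1d (Mbox a) (conv1d (Mbox b) (Mbox τ)) w
      = diffOp a (diffOp b (diffOp τ (fun y => max y 0 ^ 2))) w / (2 * a * b * τ) := by
  rw [conv1d_Mbox_Mbox hb hτ, conv1d_Mbox_eq_diffOp ha (fun u v => by
    rw [intervalIntegral.integral_div, integral_diffOp_diffOp_max_zero, div_div, sub_div])]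
  rw [diffOp_div_const]
  ring

-- `min d 0 / d` is `1` for `d < 0` and `0` for `d > 0`; written so, the identity is linear in `z`.
lemma abs_mul_max_div_zero {d : ℝ} (hd : d ≠ 0) (z : ℝ) :
    |d| * max (z / d) 0 = max z 0 - min d 0 / d * z := by
  rcases hd.lt_or_gt with hd | hd
  · rw [abs_of_neg hd, min_eq_left hd.le, div_self hd.ne]
    rcases le_total z 0 with hz | hz
    · rw [max_eq_left (div_nonneg_of_nonpos hz hd.le), max_eq_right hz]
      field_simp
      ring
    · rw [max_eq_right (div_nonpos_of_nonneg_of_nonpos hz hd.le), max_eq_left hz]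
      ring
  · rw [abs_of_pos hd, min_eq_right hd.le, zero_div, zero_mul, sub_zero,
      mul_max_of_nonneg _ _ hd.le, mul_div_cancel₀ _ hd.ne', mul_zero]

lemma abs_mul_diffOp_one_max_zero_div {d : ℝ} (hd : d ≠ 0) (x y : ℝ) :
    |d| * (diffOp 1 (fun z => max z 0) (x / d) - diffOp 1 (fun z => max z 0) (y / d))
      = diffOp d (fun z => max z 0) x - diffOp d (fun z => max z 0) y := by
  have hsub : ∀ z, z / d - 1 = (z - d) / d := fun z => by field_simp
  simp only [diffOp, hsub]
  linear_combination abs_mul_max_div_zero hd x - abs_mul_max_div_zero hd (x - d)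
    - abs_mul_max_div_zero hd y + abs_mul_max_div_zero hd (y - d)

lemma integral_comp_mul_add_eq_abs_inv_mul (f : ℝ → ℝ) (a b : ℝ) :
    ∫ t, f (a * t + b) = |a⁻¹| * ∫ y, f y := by
  rw [Measure.integral_comp_mul_left (fun y => f (y + b)) a,
    integral_add_right_eq_self (fun y => f y) b, smul_eq_mul]

lemma integral_indicator_square_along_line {c d : ℝ} (hc : c ≠ 0) (hd : d ≠ 0)
    (hcd : c ^ 2 + d ^ 2 = 1) (r : ℝ) :
    ∫ t : ℝ, (Ico (0:ℝ) 1 ×ˢ Ico (0:ℝ) 1).indicator (fun _ => (1:ℝ)) (r • (d, -c) + t • (c, d))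
      = diffOp c (diffOp d (fun z => max z 0)) (r + c) / (c * d) := by
  set χ := (Ico (0:ℝ) 1).indicator (1 : ℝ → ℝ)
  calc ∫ t : ℝ, (Ico (0:ℝ) 1 ×ˢ Ico (0:ℝ) 1).indicator (fun _ => (1:ℝ)) (r • (d, -c) + t • (c, d))
      = |d⁻¹| * ∫ y, χ ((c * y + r) / d) * χ y := by
        rw [← integral_comp_mul_add_eq_abs_inv_mul (fun y => χ ((c * y + r) / d) * χ y) d
          (-(r * c))]
        congr 1
        funext t
        have hfst : r * d + t * c = (c * (d * t + -(r * c)) + r) / d := by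
          field_simp
          linear_combination r * hcd
        have hsnd : r * -c + t * d = d * t + -(r * c) := by ring
        simp only [Prod.smul_mk, Prod.mk_add_mk, smul_eq_mul]
        rw [← Pi.one_def, indicator_prod_one, hfst, hsnd]
    _ = |d⁻¹| * ∫ y in (0:ℝ)..1, χ (c / d * y + r / d) := by
        rw [← integral_indicator_Ico_eq_intervalIntegral zero_le_one]
        congr 2
        funext y
        rw [show (c * y + r) / d = c / d * y + r / d by ring]
        by_cases hy : y ∈ Ico (0:ℝ) 1 <;> simp [χ, hy]
    _ = |d⁻¹| * (c / d)⁻¹ * (diffOp 1 (fun z => max z 0) ((r + c) / d)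
          - diffOp 1 (fun z => max z 0) (r / d)) := by
        rw [intervalIntegral.integral_comp_mul_add _ (div_ne_zero hc hd),
          integral_indicator_Ico_zero zero_le_one, smul_eq_mul, mul_one, mul_zero, zero_add,
          ← add_div, add_comm c, mul_assoc]
    _ = diffOp c (diffOp d (fun z => max z 0)) (r + c) / (c * d) := by
        have hdiff : diffOp c (diffOp d (fun z => max z 0)) (r + c)
            = diffOp d (fun z => max z 0) (r + c) - diffOp d (fun z => max z 0) r := by
          rw [diffOp, add_sub_cancel_right]
        rw [hdiff, ← abs_mul_diffOp_one_max_zero_div hd, abs_inv]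
        field_simp
        rw [sq_abs]

lemma integral_integral_indicator_square_along_line {c d : ℝ} (hc : c ≠ 0) (hd : d ≠ 0)
    (hcd : c ^ 2 + d ^ 2 = 1) (τ s : ℝ) :
    ∫ r in (s - τ / 2)..(s + τ / 2), ∫ t : ℝ,
        (Ico (0:ℝ) 1 ×ˢ Ico (0:ℝ) 1).indicator (fun _ => (1:ℝ)) (r • (d, -c) + t • (c, d))
      = diffOp τ (diffOp c (diffOp d (fun z => max z 0 ^ 2))) (s + τ / 2 + c) / (c * d) / 2 := by
  rw [intervalIntegral.integral_congr (fun r _ => integral_indicator_square_along_line hc hd hcd r),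
    intervalIntegral.integral_div,
    intervalIntegral.integral_comp_add_right (fun r => diffOp c (diffOp d (fun z => max z 0)) r),
    integral_diffOp_diffOp_max_zero, div_right_comm]
  conv_rhs => rw [diffOp, show s + τ / 2 + c - τ = s - τ / 2 + c by ring]

/-- the parallel-beam projection of the pixel basis with box
detector blur of bin width `τ` is (up to a translation of the argument) the
3-direction box spline `M_{|sin θ|} * M_{|cos θ|} * M_τ`, given by the
second-order truncated-power formula `Δ_a Δ_b Δ_τ (·)₊² / (2abτ)`. -/
theorem pixel_projection_with_blur_is_three_direction_box_spline
    (θ τ : ℝ) (hs : Real.sin θ ≠ 0) (hc : Real.cos θ ≠ 0) (hτ : 0 < τ) :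
    ∃ shift : ℝ, ∀ s : ℝ,
      (∫ r in (s - τ / 2)..(s + τ / 2),
          ∫ t : ℝ, (Set.Ico (0:ℝ) 1 ×ˢ Set.Ico (0:ℝ) 1).indicator
            (fun _ => (1:ℝ))
            (r • (Real.sin θ, -Real.cos θ) + t • (Real.cos θ, Real.sin θ))) / τ
        = conv1d (Mbox |Real.sin θ|) (conv1d (Mbox |Real.cos θ|) (Mbox τ))
            (s + shift) ∧
      (∫ r in (s - τ / 2)..(s + τ / 2),
          ∫ t : ℝ, (Set.Ico (0:ℝ) 1 ×ˢ Set.Ico (0:ℝ) 1).indicator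
            (fun _ => (1:ℝ))
            (r • (Real.sin θ, -Real.cos θ) + t • (Real.cos θ, Real.sin θ))) / τ
        = diffOp |Real.sin θ| (diffOp |Real.cos θ| (diffOp τ
              (fun r => (max r 0) ^ 2))) (s + shift)
            / (2 * |Real.sin θ| * |Real.cos θ| * τ) := by
  refine ⟨τ / 2 + Real.cos θ
    + ((|Real.cos θ| - Real.cos θ) + (|Real.sin θ| - Real.sin θ)) / 2, fun s => ?_⟩
  rw [conv1d_Mbox_conv1d_Mbox_Mbox (abs_pos.2 hs) (abs_pos.2 hc) hτ, and_self,
    integral_integral_indicator_square_along_line hc hs (Real.cos_sq_add_sin_sq θ),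
    diffOp_comm τ, diffOp_comm τ, diffOp_diffOp_div_eq_abs, diffOp_comm |_|]
  simp only [add_assoc]
  ring
end
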